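/- Let G be a subgroup of the hyperoctahedral group H_n = {±1}^n ⋊ S_n of order n! whose image under the projection π : H_n → S_n is all of S_n. Then G is conjugate in H_n either to the natural subgroup S_n or to S_n^ε = {δ(sgn(σ))·σ : σ ∈ S_n}. -/

import Mathlib

/-- The hyperoctahedral group `H_n = {±1}^n ⋊ S_n`, with `S_n` permuting coordinates. -/
abbrev Hyperoctahedral (n : ℕ) :=
  (Fin n → ℤˣ) ⋊[(mulAutArrow : Equiv.Perm (Fin n) →* MulAut (Fin n → ℤˣ))] Equiv.Perm (Fin n)

/-!
A subgroup `G ≤ {±1}^n ⋊ S_n` mapping bijectively onto `S_n` is the graph `{(f σ, σ)}` of a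
1-cocycle `f : S_n → {±1}^n`, and conjugating `G` by `(g, 1)` changes `f` by the coboundary of `g`.
As `{±1}^n` is induced from the trivial module of a point stabiliser `S_{n-1}`, Shapiro's lemma
reduces cocycles to homomorphisms `S_{n-1} → {±1}`, which are `1` or `sign`. Concretely,
`ρ ↦ f ρ a` on the stabiliser of `a` is such a homomorphism `χ`, and
`g i = f (swap a i) i * χ (swap a i)` conjugates `f` to the constant cocycle `δ ∘ χ`.
-/

open Equiv Equiv.Perm SemidirectProduct

namespace SemidirectProduct

variable {N K : Type*} [Group N] [Group K] {φ : K →* MulAut N}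

theorem inl_mul_mk_mul_inl_inv (n a : N) (k : K) :
    inl n * (⟨a, k⟩ : N ⋊[φ] K) * (inl n)⁻¹ = ⟨n * a * φ k n⁻¹, k⟩ := by
  ext <;> simp

theorem exists_eq_range_mk_of_bijective (G : Subgroup (N ⋊[φ] K))
    (hG : Function.Bijective (rightHom.comp G.subtype)) :
    ∃ f : K → N, (∀ k₁ k₂, f (k₁ * k₂) = f k₁ * φ k₁ (f k₂)) ∧
      (G : Set (N ⋊[φ] K)) = Set.range fun k => ⟨f k, k⟩ := by
  let s := (MulEquiv.ofBijective _ hG).symm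
  have hs : ∀ k, (s k : N ⋊[φ] K) = ⟨(s k : N ⋊[φ] K).left, k⟩ := fun k =>
    SemidirectProduct.ext rfl ((MulEquiv.ofBijective _ hG).apply_symm_apply k)
  refine ⟨fun k => (s k : N ⋊[φ] K).left, fun k₁ k₂ => ?_, ?_⟩
  · simp only [map_mul, Subgroup.coe_mul, mul_left]
    rw [hs k₁]
  · calc (G : Set (N ⋊[φ] K)) = Set.range (Subtype.val ∘ s) := by
          rw [Set.range_comp, s.surjective.range_eq, Set.image_univ, Subtype.range_coe]
      _ = _ := congrArg Set.range (funext hs)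

end SemidirectProduct

namespace Equiv.Perm

variable {α : Type*} [Fintype α] [DecidableEq α]

theorem monoidHom_eq_one_or_sign (φ : Perm α →* ℤˣ) : φ = 1 ∨ φ = sign := by
  refine or_iff_not_imp_left.mpr fun hφ => eq_sign_of_surjective_hom fun u => ?_
  obtain ⟨σ, hσ⟩ : ∃ σ, φ σ ≠ 1 := by
    by_contra! h
    exact hφ (MonoidHom.ext h)
  rcases Int.units_eq_one_or u with rfl | rfl
  · exact ⟨1, map_one φ⟩
  · exact ⟨σ, (Int.units_eq_one_or _).resolve_left hσ⟩

end Equiv.Perm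

/-- Crossed homomorphisms `Perm α → (α → ℤˣ)` for the action `v ↦ v ∘ σ⁻¹` (`mulAutArrow`). -/
def IsPermCocycle {α : Type*} (f : Perm α → α → ℤˣ) : Prop :=
  ∀ σ τ i, f (σ * τ) i = f σ i * f τ (σ⁻¹ i)

namespace IsPermCocycle

variable {α : Type*} {f : Perm α → α → ℤˣ}

theorem map_one (hf : IsPermCocycle f) : f 1 = 1 := by
  funext i
  simpa using hf 1 1 i

theorem swap_apply_left [DecidableEq α] (hf : IsPermCocycle f) (a i : α) :
    f (swap a i) a = f (swap a i) i := by
  have h := hf (swap a i) (swap a i) i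
  rw [swap_mul_self, hf.map_one, swap_inv, swap_apply_right, Pi.one_apply, eq_comm] at h
  rw [eq_inv_of_mul_eq_one_right h, Int.units_inv_eq_self]

theorem exists_monoidHom_eq_on_stabilizer [Fintype α] [DecidableEq α] (hf : IsPermCocycle f)
    (a : α) :
    ∃ χ : Perm α →* ℤˣ, (χ = 1 ∨ χ = sign) ∧ ∀ ρ : Perm α, ρ a = a → f ρ a = χ ρ := by
  let ψ : Perm {x // x ≠ a} →* ℤˣ := MonoidHom.mk' (fun τ => f (ofSubtype τ) a) fun τ₁ τ₂ => by
    rw [_root_.map_mul, hf, ← _root_.map_inv,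
      ofSubtype_apply_of_not_mem (p := (· ≠ a)) _ (not_not.mpr rfl)]
  have hψ : ∀ ρ : Perm α, ∀ hρ : ρ a = a,
      ψ (ρ.subtypePerm fun x => ρ.injective.ne_iff' hρ) = f ρ a := fun ρ hρ =>
    congrArg (f · a) (ofSubtype_subtypePerm _ fun x hx h => hx (h ▸ hρ))
  rcases monoidHom_eq_one_or_sign ψ with h | h
  · exact ⟨1, .inl rfl, fun ρ hρ => by rw [← hψ ρ hρ, h]; rfl⟩
  · refine ⟨sign, .inr rfl, fun ρ hρ => ?_⟩
    rw [← hψ ρ hρ, h, sign_subtypePerm]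
    exact fun x hx h => hx (h ▸ hρ)

theorem exists_eq_coboundary [Fintype α] [DecidableEq α] (hf : IsPermCocycle f) :
    ∃ (g : α → ℤˣ) (χ : Perm α →* ℤˣ), (χ = 1 ∨ χ = sign) ∧
      ∀ σ i, f σ i = g i * χ σ * g (σ⁻¹ i) := by
  rcases isEmpty_or_nonempty α with _ | ⟨⟨a⟩⟩
  · exact ⟨1, 1, .inl rfl, fun σ i => isEmptyElim i⟩
  obtain ⟨χ, hχ, hfχ⟩ := hf.exists_monoidHom_eq_on_stabilizer a
  refine ⟨fun i => f (swap a i) i * χ (swap a i), χ, hχ, fun σ i => ?_⟩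
  set j := σ⁻¹ i
  set ρ := swap a i * σ * swap a j
  have hρ : ρ a = a := by simp [ρ, j]
  have hσ : σ = swap a i * (ρ * swap a j) := by simp [ρ, ← mul_assoc]
  have hρχ : χ ρ = χ (swap a i) * χ σ * χ (swap a j) := by simp only [ρ, _root_.map_mul]
  calc f σ i = f (swap a i) i * (f ρ a * f (swap a j) a) := by
        rw [hσ, hf, hf, swap_inv, swap_apply_right, inv_eq_iff_eq.mpr hρ.symm]
    _ = _ := by
      rw [hfχ ρ hρ, hρχ, hf.swap_apply_left]
      dsimp only
      ac_rfl

end IsPermCocycle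

/-- A subgroup of `H_n` of order `n!` projecting onto `S_n` is conjugate in `H_n` either to
the natural subgroup `S_n` or to `S_n^ε = {δ(sgn σ)·σ : σ ∈ S_n}`. -/
theorem subgroup_order_factorial_conj_sn_or_snEps {n : ℕ}
    (G : Subgroup (Hyperoctahedral n)) (hcard : Nat.card G = Nat.factorial n)
    (hproj : Subgroup.map SemidirectProduct.rightHom G = ⊤) :
    ∃ h : Hyperoctahedral n,
      (fun k => h * k * h⁻¹) '' (G : Set (Hyperoctahedral n)) =
          Set.range (SemidirectProduct.inr : Equiv.Perm (Fin n) →* Hyperoctahedral n) ∨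
        (fun k => h * k * h⁻¹) '' (G : Set (Hyperoctahedral n)) =
          Set.range fun σ : Equiv.Perm (Fin n) =>
            (⟨fun _ => Equiv.Perm.sign σ, σ⟩ : Hyperoctahedral n) := by
  have : Finite G := Nat.finite_of_card_ne_zero (hcard ▸ n.factorial_ne_zero)
  have hsurj : Function.Surjective (rightHom.comp G.subtype) := by
    rw [← MonoidHom.range_eq_top, MonoidHom.range_comp, Subgroup.range_subtype, hproj]
  have hbij : Function.Bijective (rightHom.comp G.subtype) := by
    rw [Nat.bijective_iff_surjective_and_card, hcard, Nat.card_perm, Nat.card_fin]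
    exact ⟨hsurj, rfl⟩
  obtain ⟨f, hf, hG⟩ := exists_eq_range_mk_of_bijective G hbij
  obtain ⟨g, χ, hχ, hfg⟩ := IsPermCocycle.exists_eq_coboundary fun σ τ i => congrFun (hf σ τ) i
  have hconj : (fun k => inl g * k * (inl g)⁻¹) '' (G : Set (Hyperoctahedral n)) =
      Set.range fun σ => (⟨fun _ => χ σ, σ⟩ : Hyperoctahedral n) := by
    rw [hG, ← Set.range_comp]
    congr 1
    funext σ
    simp only [Function.comp_apply, inl_mul_mk_mul_inl_inv]
    congr 1
    funext i
    show g i * f σ i * (g (σ⁻¹ i))⁻¹ = χ σ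
    rw [hfg, ← mul_assoc, ← mul_assoc, Int.units_mul_self, one_mul, mul_inv_cancel_right]
  refine ⟨inl g, ?_⟩
  rcases hχ with rfl | rfl
  · exact .inl hconj
  · exact .inr hconj
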